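/- Let X be a compact, locally connected, metrizable topological space and let G be a countable group acting by homeomorphisms on X such that the orbit space X/G is Hausdorff. Then every sequence (g_n) in G admits a subsequence (g_{n_k}) and a homeomorphism h : X → X such that the continuous maps x ↦ g_{n_k}•x converge to h in the compact-open topology on C(X, X) as k → ∞. -/

import Mathlib

/-!
The action is equicontinuous. The orbit of `x` is closed, since the orbit space is Hausdorff, and
countable, so some neighbourhood `V` of it contains no preconnected set of diameter `≥ ε`. The
orbit relation is closed in the compact space `X × X`, so a small connected neighbourhood `U` of
`x` has all its translates `g • U` inside `V`; hence these translates are uniformly small.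

By Arzelà–Ascoli a subsequence of `(g k, (g k)⁻¹)` converges in `C(X, X) × C(X, X)`, and
continuity of composition makes the two limits mutually inverse.
-/

open Filter Topology Metric Set

theorem Set.Countable.exists_mem_Ioo_forall_dist_ne {α : Type*} [PseudoMetricSpace α]
    {s : Set α} (hs : s.Countable) (a : α) {ε : ℝ} (hε : 0 < ε) :
    ∃ r ∈ Ioo 0 ε, ∀ z ∈ s, dist z a ≠ r := by
  obtain ⟨r, hr, hrε⟩ := ((hs.image (dist · a)).dense_compl ℝ).exists_between hε
  exact ⟨r, hrε, fun z hz hzr => hr ⟨z, hz, hzr⟩⟩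

/-- Around each point of `s` choose a ball whose boundary sphere misses `s`; finitely many cover
`s`, and a preconnected set avoiding the spheres and meeting one of these balls stays inside it. -/
theorem IsCompact.exists_isOpen_superset_forall_isPreconnected_dist_lt {α : Type*}
    [PseudoMetricSpace α] {s : Set α} (hsc : IsCompact s) (hs : s.Countable) {ε : ℝ}
    (hε : 0 < ε) :
    ∃ V, IsOpen V ∧ s ⊆ V ∧
      ∀ C ⊆ V, IsPreconnected C → ∀ x ∈ C, ∀ y ∈ C, dist x y < ε := by
  choose! r hr hrs using fun a : α => hs.exists_mem_Ioo_forall_dist_ne a (half_pos hε)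
  obtain ⟨t, -, hst⟩ :=
    hsc.elim_nhds_subcover (fun a => ball a (r a)) fun a _ => ball_mem_nhds a (hr a).1
  refine ⟨(⋃ a ∈ t, ball a (r a)) ∩ ⋂ a ∈ t, (sphere a (r a))ᶜ,
    (isOpen_biUnion fun a _ => isOpen_ball).inter
      (isOpen_biInter_finset fun a _ => isClosed_sphere.isOpen_compl),
    fun z hz => ⟨hst hz, mem_iInter₂.2 fun a _ => hrs a z hz⟩, ?_⟩
  intro C hCV hC x hx y hy
  obtain ⟨a, hat, hxa⟩ := mem_iUnion₂.1 (hCV hx).1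
  have hC_ball : C ⊆ ball a (r a) := by
    refine hC.subset_left_of_subset_union isOpen_ball isClosed_closedBall.isOpen_compl
      (disjoint_compl_right_iff_subset.2 ball_subset_closedBall) (fun z hz => ?_) ⟨x, hx, hxa⟩
    have hz_sphere : dist z a ≠ r a := mem_iInter₂.1 (hCV hz).2 a hat
    exact (lt_or_gt_of_ne hz_sphere).imp id not_le.2
  calc dist x y ≤ dist x a + dist y a := dist_triangle_right x y a
    _ < r a + r a := add_lt_add (hC_ball hx) (hC_ball hy)
    _ < ε := by linarith [(hr a).2]

section OrbitSpace

variable {G X : Type*} [Group G] [TopologicalSpace X] [MulAction G X]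
  [T2Space (Quotient (MulAction.orbitRel G X))]

theorem MulAction.isClosed_setOf_mem_orbit :
    IsClosed {p : X × X | p.2 ∈ orbit G p.1} := by
  simp only [← orbitRel_apply, ← Quotient.eq (r := orbitRel G X)]
  exact isClosed_eq (continuous_quotient_mk'.comp continuous_snd)
    (continuous_quotient_mk'.comp continuous_fst)

theorem MulAction.isClosed_orbit (x : X) : IsClosed (orbit G x) :=
  isClosed_setOf_mem_orbit.preimage (Continuous.prodMk_right x)

theorem MulAction.eventually_nhds_forall_smul_mem [CompactSpace X] {x : X} {V : Set X}
    (hV : IsOpen V) (hxV : orbit G x ⊆ V) : ∀ᶠ w in 𝓝 x, ∀ g : G, g • w ∈ V := by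
  have hB : IsClosed (Prod.fst '' {p : X × X | p.2 ∈ orbit G p.1 ∧ p.2 ∉ V}) :=
    isClosedMap_fst_of_compactSpace _
      (isClosed_setOf_mem_orbit.inter (hV.isClosed_compl.preimage continuous_snd))
  filter_upwards [hB.isOpen_compl.mem_nhds fun ⟨p, ⟨hp, hpV⟩, hpx⟩ => hpV (hxV (hpx ▸ hp))]
    with w hw g
  by_contra hgw
  exact hw ⟨(w, g • w), ⟨mem_orbit w g, hgw⟩, rfl⟩

end OrbitSpace

theorem equicontinuous_smul_of_t2Space_quotient {G X : Type*} [Group G] [Countable G]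
    [PseudoMetricSpace X] [CompactSpace X] [LocallyConnectedSpace X] [MulAction G X]
    [ContinuousConstSMul G X] [T2Space (Quotient (MulAction.orbitRel G X))] :
    Equicontinuous (fun g : G => (g • · : X → X)) := by
  intro x
  rw [Metric.equicontinuousAt_iff_right]
  intro ε hε
  obtain ⟨V, hVo, hxV, hV⟩ := (MulAction.isClosed_orbit x).isCompact
    |>.exists_isOpen_superset_forall_isPreconnected_dist_lt (countable_range fun g : G => g • x) hε
  set W := {w : X | ∀ g : G, g • w ∈ V}
  have hW : W ∈ 𝓝 x := MulAction.eventually_nhds_forall_smul_mem hVo hxV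
  filter_upwards [connectedComponentIn_mem_nhds hW] with y hy g
  exact hV _ (image_subset_iff.2 fun z hz => connectedComponentIn_subset W x hz g)
    (isPreconnected_connectedComponentIn.image _ (continuous_const_smul g).continuousOn)
    _ (mem_image_of_mem _ (mem_connectedComponentIn (mem_of_mem_nhds hW)))
    _ (mem_image_of_mem _ hy)

theorem Equicontinuous.isCompact_closure_range {ι X α : Type*} [TopologicalSpace X]
    [UniformSpace α] [CompactSpace α] {F : ι → C(X, α)} (hF : Equicontinuous fun i => ⇑(F i)) :
    IsCompact (closure (range F)) := by
  set K := closure (range fun i => ⇑(F i))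
  have hK : K.Equicontinuous := (equicontinuous_iff_range.1 hF).closure
  have hS : IsCompact {f : C(X, α) | ⇑f ∈ K} := by
    have himage : ContinuousMap.toFun '' {f : C(X, α) | ⇑f ∈ K} = K :=
      Subset.antisymm (image_subset_iff.2 fun f hf => hf) fun f hf =>
        ⟨⟨f, hK.continuous_of_mem hf⟩, hf, rfl⟩
    refine ArzelaAscoli.isCompact_of_equicontinuous _ ?_ (hK.comp fun f => ⟨_, f.2⟩)
    rw [himage]
    exact isClosed_closure.isCompact
  refine hS.of_isClosed_subset isClosed_closure (closure_minimal ?_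
    (isClosed_closure.preimage continuous_coeFun))
  rintro _ ⟨i, rfl⟩
  exact subset_closure ⟨i, rfl⟩

theorem exists_homeomorph_coe_eq_of_tendsto {ι X : Type*} [TopologicalSpace X]
    [LocallyCompactSpace X] [T2Space X] {l : Filter ι} [l.NeBot] {h : ι → X ≃ₜ X}
    {f f' : C(X, X)} (hf : Tendsto (fun i => (h i : C(X, X))) l (𝓝 f))
    (hf' : Tendsto (fun i => ((h i).symm : C(X, X))) l (𝓝 f')) :
    ∃ e : X ≃ₜ X, (e : C(X, X)) = f := by
  have hcomp {a b : ι → C(X, X)} {u v : C(X, X)} (ha : Tendsto a l (𝓝 u))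
      (hb : Tendsto b l (𝓝 v)) : Tendsto (fun i => (b i).comp (a i)) l (𝓝 (v.comp u)) :=
    (ContinuousMap.continuous_comp'.tendsto (u, v)).comp (ha.prodMk_nhds hb)
  have hleft : f'.comp f = ContinuousMap.id X :=
    tendsto_nhds_unique (hcomp hf hf') (by simp)
  have hright : f.comp f' = ContinuousMap.id X :=
    tendsto_nhds_unique (hcomp hf' hf) (by simp)
  exact ⟨⟨⟨f, f', DFunLike.congr_fun hleft, DFunLike.congr_fun hright⟩, f.continuous,
    f'.continuous⟩, rfl⟩

theorem exists_subseq_tendsto_homeomorph_smul {G X : Type*} [Group G] [MetricSpace X]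
    [CompactSpace X] [MulAction G X] [ContinuousConstSMul G X]
    (hG : Equicontinuous (fun g : G => (g • · : X → X))) (g : ℕ → G) :
    ∃ φ : ℕ → ℕ, StrictMono φ ∧ ∃ h : X ≃ₜ X,
      Tendsto (fun k => ((Homeomorph.smul (g (φ k)) : X ≃ₜ X) : C(X, X))) atTop (𝓝 h) := by
  have hK : IsCompact (closure (range fun a : G => (Homeomorph.smul (α := X) a : C(X, X)))) :=
    hG.isCompact_closure_range
  obtain ⟨⟨f, f'⟩, -, φ, hφ, hlim⟩ := (hK.prod hK).tendsto_subseq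
    (x := fun k => ((Homeomorph.smul (α := X) (g k) : C(X, X)),
      ((Homeomorph.smul (α := X) (g k)).symm : C(X, X))))
    fun k => ⟨subset_closure ⟨g k, rfl⟩, subset_closure ⟨(g k)⁻¹, rfl⟩⟩
  have hf : Tendsto (fun k => (Homeomorph.smul (α := X) (g (φ k)) : C(X, X))) atTop (𝓝 f) :=
    hlim.fst_nhds
  have hf' : Tendsto (fun k => ((Homeomorph.smul (α := X) (g (φ k))).symm : C(X, X))) atTop
      (𝓝 f') :=
    hlim.snd_nhds
  obtain ⟨e, rfl⟩ := exists_homeomorph_coe_eq_of_tendsto hf hf'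
  exact ⟨φ, hφ, e, hf⟩

/-- For a countable group acting on a compact, locally connected, metrizable space with
Hausdorff orbit space, every sequence in `G` has a subsequence converging in the
compact-open topology to a homeomorphism of `X`. -/
theorem stmt17 {G X : Type*} [Group G] [Countable G] [TopologicalSpace X]
    [CompactSpace X] [LocallyConnectedSpace X] [TopologicalSpace.MetrizableSpace X]
    [MulAction G X] [ContinuousConstSMul G X]
    [T2Space (Quotient (MulAction.orbitRel G X))]
    (g : ℕ → G) :
    ∃ φ : ℕ → ℕ, StrictMono φ ∧ ∃ h : X ≃ₜ X,
      Filter.Tendsto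
        (fun k : ℕ => ((Homeomorph.smul (g (φ k)) : X ≃ₜ X) : C(X, X)))
        Filter.atTop (nhds (h : C(X, X))) := by
  let : MetricSpace X := TopologicalSpace.metrizableSpaceMetric X
  exact exists_subseq_tendsto_homeomorph_smul equicontinuous_smul_of_t2Space_quotient g
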